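/- arXiv:1312.4066 — 10 statements merged into one kernel-verified Lean document; each statement's English description precedes it below -/
import Mathlib

section
/- In KSPM(p), if configurations b' and b'' are obtained from configuration b by firing columns i and j respectively (with i ≠ j), then there exists a configuration b''' obtainable from b' by firing j and from b'' by firing i (the diamond property). -/
/-- Firing column `i` in KSPM(p): requires slope `> p` at `i`; column `i-1`
(if it exists) gains `p`, column `i` loses `p+1`, column `i+p` gains `1`. -/
def fires (p : ℕ) (b b' : ℕ → ℤ) (i : ℕ) : Prop :=
  (p : ℤ) < b i ∧
  b' i = b i - (p + 1) ∧
  b' (i + p) = b (i + p) + 1 ∧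
  (1 ≤ i → b' (i - 1) = b (i - 1) + p) ∧
  ∀ j : ℕ, j ≠ i → j ≠ i + p → (i = 0 ∨ j ≠ i - 1) → b' j = b j

/-- The change at column `k` when firing column `i`. -/
def fireDelta (p i k : ℕ) : ℤ :=
  (if k = i then -((p : ℤ) + 1) else 0) + (if k = i + p then 1 else 0) +
    (if i ≠ 0 ∧ k = i - 1 then (p : ℤ) else 0)

lemma fires_delta {p : ℕ} (hp : 0 < p) {b b' : ℕ → ℤ} {i : ℕ}
    (h : fires p b b' i) : ∀ k, b' k = b k + fireDelta p i k := by
  obtain ⟨h1, h2, h3, h4, h5⟩ := h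
  intro k
  unfold fireDelta
  by_cases hk1 : k = i
  · subst hk1
    rw [if_pos rfl, if_neg (by omega), if_neg (by omega)]
    linarith
  · by_cases hk2 : k = i + p
    · subst hk2
      rw [if_neg (by omega), if_pos rfl, if_neg (by omega)]
      linarith
    · by_cases hk3 : i ≠ 0 ∧ k = i - 1
      · obtain ⟨hi0, hk⟩ := hk3
        subst hk
        rw [if_neg (by omega), if_neg (by omega), if_pos ⟨hi0, rfl⟩]
        linarith [h4 (by omega)]
      · rw [if_neg hk1, if_neg hk2, if_neg hk3]
        rw [h5 k hk1 hk2 (by omega)]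
        ring

lemma fires_of_delta {p : ℕ} (hp : 0 < p) {b b' : ℕ → ℤ} {j : ℕ}
    (hb : (p : ℤ) < b j) (h : ∀ k, b' k = b k + fireDelta p j k) :
    fires p b b' j := by
  refine ⟨hb, ?_, ?_, ?_, ?_⟩
  · rw [h j]; unfold fireDelta
    rw [if_pos rfl, if_neg (by omega), if_neg (by omega)]; ring
  · rw [h (j + p)]; unfold fireDelta
    rw [if_neg (by omega), if_pos rfl, if_neg (by omega)]; ring
  · intro hj
    rw [h (j - 1)]; unfold fireDelta
    rw [if_neg (by omega), if_neg (by omega), if_pos ⟨by omega, rfl⟩]; ring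
  · intro k hk1 hk2 hk3
    rw [h k]; unfold fireDelta
    rw [if_neg hk1, if_neg hk2, if_neg (by omega)]; ring

lemma fireDelta_nonneg {p i k : ℕ} (hik : k ≠ i) : 0 ≤ fireDelta p i k := by
  unfold fireDelta
  split_ifs <;> omega

/-- The diamond property of KSPM(p). -/
theorem kspm_diamond (p : ℕ) (hp : 0 < p) (b b' b'' : ℕ → ℤ)
    (hnonneg : ∀ k, 0 ≤ b k) (hnull : ∃ n, ∀ k, n ≤ k → b k = 0)
    (i j : ℕ) (hij : i ≠ j)
    (h' : fires p b b' i) (h'' : fires p b b'' j) :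
    ∃ b''' : ℕ → ℤ, fires p b' b''' j ∧ fires p b'' b''' i := by
  refine ⟨fun k => b k + fireDelta p i k + fireDelta p j k, ?_, ?_⟩
  · apply fires_of_delta hp
    · rw [fires_delta hp h' j]
      have := fireDelta_nonneg (p := p) (i := i) (k := j) (Ne.symm hij)
      linarith [h''.1]
    · intro k
      rw [fires_delta hp h' k]
  · apply fires_of_delta hp
    · rw [fires_delta hp h'' i]
      have := fireDelta_nonneg (p := p) (i := j) (k := i) hij
      linarith [h'.1]
    · intro k
      rw [fires_delta hp h'' k]
      ring
end

section
/- In KSPM(p), from any configuration b (ultimately null non-negative integer slope sequence with finitely many grains), every maximal sequence of firings terminates, and all terminate at the same stable configuration π(b); moreover if b →* b' then π(b') = π(b). -/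
def kstep (p : ℕ) (b b' : ℕ → ℤ) : Prop := ∃ i, fires p b b' i

def stable (p : ℕ) (b : ℕ → ℤ) : Prop := ∀ i, b i ≤ (p : ℤ)

namespace KSPMaux

/-- The offset added by firing at column `i`. -/
def delta (p i : ℕ) : ℕ → ℤ := fun k =>
  (if k = i then -((p : ℤ)+1) else 0) + (if k = i + p then 1 else 0) +
  (if 1 ≤ i ∧ k = i - 1 then (p : ℤ) else 0)

lemma delta_nonneg (p i : ℕ) {k : ℕ} (hk : k ≠ i) : 0 ≤ delta p i k := by
  unfold delta
  simp only [if_neg hk]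
  positivity

lemma fires_eq {p : ℕ} (hp : 0 < p) {b b' : ℕ → ℤ} {i : ℕ}
    (h : fires p b b' i) : b' = fun k => b k + delta p i k := by
  obtain ⟨h1, h2, h3, h4, h5⟩ := h
  funext k
  show b' k = b k + delta p i k
  unfold delta
  by_cases hk : k = i
  · subst hk
    have : ¬ k = k + p := by omega
    have h' : ¬ (1 ≤ k ∧ k = k - 1) := by omega
    rw [if_pos rfl, if_neg this, if_neg h', h2]; ring
  · by_cases hk2 : k = i + p
    · subst hk2
      have h' : ¬ (1 ≤ i ∧ i + p = i - 1) := by omega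
      rw [if_neg hk, if_pos rfl, if_neg h', h3]; ring
    · by_cases hi : 1 ≤ i
      · by_cases hk3 : k = i - 1
        · subst hk3
          rw [if_neg hk, if_neg hk2, if_pos (⟨hi, rfl⟩ : 1 ≤ i ∧ i - 1 = i - 1),
            h4 hi]; ring
        · have h' : ¬ (1 ≤ i ∧ k = i - 1) := fun h => hk3 h.2
          rw [if_neg hk, if_neg hk2, if_neg h', h5 k hk hk2 (Or.inr hk3)]; ring
      · have hi0 : i = 0 := by omega
        have h' : ¬ (1 ≤ i ∧ k = i - 1) := fun h => hi h.1
        rw [if_neg hk, if_neg hk2, if_neg h', h5 k hk hk2 (Or.inl hi0)]; ring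

lemma fires_fire {p : ℕ} (hp : 0 < p) {b : ℕ → ℤ} {i : ℕ} (h : (p : ℤ) < b i) :
    fires p b (fun k => b k + delta p i k) i := by
  refine ⟨h, ?_, ?_, ?_, ?_⟩
  · unfold delta
    have h1 : ¬ i = i + p := by omega
    have h2 : ¬ (1 ≤ i ∧ i = i - 1) := by omega
    show b i + _ = _; rw [if_pos rfl, if_neg h1, if_neg h2]; ring
  · unfold delta
    have h1 : ¬ i + p = i := by omega
    have h2 : ¬ (1 ≤ i ∧ i + p = i - 1) := by omega
    show b (i+p) + _ = _; rw [if_neg h1, if_pos rfl, if_neg h2]; ring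
  · intro hi
    unfold delta
    have h1 : ¬ i - 1 = i := by omega
    have h2 : ¬ i - 1 = i + p := by omega
    show b (i-1) + _ = _; rw [if_neg h1, if_neg h2, if_pos (⟨hi, rfl⟩ : 1 ≤ i ∧ i - 1 = i - 1)]; ring
  · intro j hj1 hj2 hj3
    unfold delta
    have h2 : ¬ (1 ≤ i ∧ j = i - 1) := by
      rcases hj3 with h | h
      · omega
      · exact fun hh => h hh.2
    show b j + _ = _; rw [if_neg hj1, if_neg hj2, if_neg h2]; ring

lemma kstep_fire {p : ℕ} (hp : 0 < p) {b : ℕ → ℤ} {i : ℕ} (h : (p : ℤ) < b i) :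
    kstep p b (fun k => b k + delta p i k) := ⟨i, fires_fire hp h⟩

end KSPMaux
namespace KSPMaux
open Finset

/-- Weighted sum of a configuration over `range n`. -/
def Sval (w g : ℕ → ℤ) (n : ℕ) : ℤ := ∑ k ∈ Finset.range n, w k * g k

lemma Sval_pad (w g : ℕ → ℤ) {n n' : ℕ} (hb : ∀ k, n ≤ k → g k = 0) (h : n ≤ n') :
    Sval w g n' = Sval w g n := by
  refine (Finset.sum_subset (Finset.range_subset_range.mpr h) ?_).symm
  intro x _ hx
  rw [hb x (by simpa using hx), mul_zero]

lemma Sval_add (w g d : ℕ → ℤ) (n : ℕ) :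
    Sval w (fun k => g k + d k) n = Sval w g n + Sval w d n := by
  simp [Sval, mul_add, Finset.sum_add_distrib]

lemma Sval_delta (w : ℕ → ℤ) {p i n : ℕ} (hn : i + p < n) :
    Sval w (delta p i) n
      = w i * (-((p:ℤ)+1)) + w (i+p) + (if 1 ≤ i then (p : ℤ) * w (i-1) else 0) := by
  have hi : i ∈ Finset.range n := by simp; omega
  have hip : i + p ∈ Finset.range n := by simp; omega
  have him : i - 1 ∈ Finset.range n := by simp; omega
  simp only [Sval, delta, mul_add, Finset.sum_add_distrib, mul_ite, mul_zero, mul_one]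
  congr 1
  · congr 1
    · rw [Finset.sum_ite_eq' (Finset.range n) i (fun k => w k * (-((p:ℤ)+1))), if_pos hi]
    · rw [Finset.sum_ite_eq' (Finset.range n) (i+p) (fun k => w k), if_pos hip]
  · by_cases h1 : 1 ≤ i
    · simp only [h1, true_and, if_true]
      rw [Finset.sum_ite_eq' (Finset.range n) (i-1) (fun k => w k * (p:ℤ)), if_pos him]
      ring
    · simp [h1]

/-- weight `k+1`; `Sval w₁` is the number of grains. -/
noncomputable def w₁ : ℕ → ℤ := fun k => (k : ℤ) + 1
/-- weight `k(k+1)`; `Sval w₂` is twice the total rightward displacement. -/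
noncomputable def w₂ : ℕ → ℤ := fun k => (k : ℤ) * ((k : ℤ) + 1)

lemma Sval_delta_w₁ {p i n : ℕ} (hn : i + p < n) : Sval w₁ (delta p i) n = 0 := by
  rw [Sval_delta w₁ hn]
  by_cases h1 : 1 ≤ i
  · have : ((i - 1 : ℕ) : ℤ) = (i : ℤ) - 1 := by
      rw [Nat.cast_sub h1]; simp
    simp only [w₁, if_pos h1, this]
    push_cast
    ring
  · simp only [w₁, if_neg h1]
    have : i = 0 := by omega
    subst this
    push_cast
    ring

lemma Sval_delta_w₂ {p i n : ℕ} (hn : i + p < n) :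
    Sval w₂ (delta p i) n = (p : ℤ) * ((p : ℤ) + 1) := by
  rw [Sval_delta w₂ hn]
  by_cases h1 : 1 ≤ i
  · have : ((i - 1 : ℕ) : ℤ) = (i : ℤ) - 1 := by
      rw [Nat.cast_sub h1]; simp
    simp only [w₂, if_pos h1, this]
    push_cast
    ring
  · simp only [w₂, if_neg h1]
    have : i = 0 := by omega
    subst this
    push_cast
    ring

lemma Sval_nonneg {w g : ℕ → ℤ} (hw : ∀ k, 0 ≤ w k) (hg : ∀ k, 0 ≤ g k) (n : ℕ) :
    0 ≤ Sval w g n :=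
  Finset.sum_nonneg fun k _ => mul_nonneg (hw k) (hg k)

/-- The key bound: the displacement weight is bounded by the cube of grains. -/
lemma Sval_w₂_le {g : ℕ → ℤ} (hg : ∀ k, 0 ≤ g k) (n : ℕ) :
    Sval w₂ g n ≤ (Sval w₁ g n) ^ 3 := by
  set N := Sval w₁ g n with hN
  have hN0 : 0 ≤ N := Sval_nonneg (fun k => by simp [w₁]; positivity) hg n
  have key : ∀ k ∈ Finset.range n, w₂ k * g k ≤ (N * N) * g k := by
    intro k hk
    rcases le_or_gt (g k) 0 with h | h
    · have : g k = 0 := le_antisymm h (hg k)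
      simp [this]
    · have h1 : (1 : ℤ) ≤ g k := h
      have hterm : ((k : ℤ) + 1) * g k ≤ N := by
        refine Finset.single_le_sum (f := fun k => w₁ k * g k) ?_ hk
        intro j _
        exact mul_nonneg (by simp [w₁]; positivity) (hg j)
      have hk1 : (k : ℤ) + 1 ≤ N := by nlinarith [Int.natCast_nonneg k]
      have : w₂ k ≤ N * N := by
        simp only [w₂]
        nlinarith [Int.natCast_nonneg k]
      exact mul_le_mul_of_nonneg_right this (hg k)
  have h2 : Sval w₂ g n ≤ (N * N) * Sval (fun _ => 1) g n := by
    rw [Sval]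
    calc ∑ k ∈ Finset.range n, w₂ k * g k ≤ ∑ k ∈ Finset.range n, (N * N) * g k :=
          Finset.sum_le_sum key
      _ = (N * N) * Sval (fun _ => 1) g n := by
          rw [Sval, Finset.mul_sum]; simp [mul_comm]
  have h3 : Sval (fun _ => 1) g n ≤ N := by
    refine Finset.sum_le_sum ?_
    intro k _
    have : (1:ℤ) * g k ≤ ((k:ℤ)+1) * g k :=
      mul_le_mul_of_nonneg_right (by omega) (hg k)
    simpa [w₁] using this
  calc Sval w₂ g n ≤ (N * N) * Sval (fun _ => 1) g n := h2
    _ ≤ (N * N) * N := by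
        exact mul_le_mul_of_nonneg_left h3 (by positivity)
    _ = N ^ 3 := by ring

end KSPMaux
section
variable {p : ℕ}
open KSPMaux Relation

lemma diamond (hp : 0 < p) : ∀ a b c : ℕ → ℤ, kstep p a b → kstep p a c →
    ∃ d, ReflGen (kstep p) b d ∧ ReflTransGen (kstep p) c d := by
  rintro a b c ⟨i, hi⟩ ⟨j, hj⟩
  have hbi : (p : ℤ) < a i := hi.1
  have hbj : (p : ℤ) < a j := hj.1
  have hb : b = fun k => a k + delta p i k := fires_eq hp hi
  have hc : c = fun k => a k + delta p j k := fires_eq hp hj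
  subst hb hc
  by_cases hij : i = j
  · subst hij
    exact ⟨_, ReflGen.refl, ReflTransGen.refl⟩
  · refine ⟨fun k => (a k + delta p i k) + delta p j k, ?_, ?_⟩
    · refine ReflGen.single (kstep_fire hp ?_)
      have : 0 ≤ delta p i j := delta_nonneg p i (fun h => hij h.symm)
      simpa using lt_of_lt_of_le hbj (by linarith)
    · have : 0 ≤ delta p j i := delta_nonneg p j hij
      have hstep : kstep p (fun k => a k + delta p j k)
          (fun k => (a k + delta p j k) + delta p i k) :=
        kstep_fire hp (by simpa using lt_of_lt_of_le hbi (by linarith))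
      have : (fun k => (a k + delta p j k) + delta p i k)
          = fun k => (a k + delta p i k) + delta p j k := by funext k; ring
      exact ReflTransGen.single (this ▸ hstep)

lemma stable_stop (hp : 0 < p) {c d : ℕ → ℤ} (hs : stable p c)
    (h : Relation.ReflTransGen (kstep p) c d) : d = c := by
  rcases Relation.ReflTransGen.cases_head h with rfl | ⟨e, ⟨i, hf⟩, _⟩
  · rfl
  · exact absurd hf.1 (not_lt.mpr (hs i))

lemma stable_unique (hp : 0 < p) {a c c' : ℕ → ℤ}
    (h1 : Relation.ReflTransGen (kstep p) a c) (h2 : Relation.ReflTransGen (kstep p) a c')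
    (hs : stable p c) (hs' : stable p c') : c' = c := by
  obtain ⟨d, hd1, hd2⟩ := Relation.church_rosser (diamond hp) h1 h2
  rw [← stable_stop hp hs hd1, ← stable_stop hp hs' hd2]

end
namespace KSPMaux

lemma delta_self {p i : ℕ} (hp : 0 < p) : delta p i i = -((p:ℤ)+1) := by
  have h1 : ¬ i = i + p := by omega
  have h2 : ¬ (1 ≤ i ∧ i = i - 1) := by omega
  rw [delta, if_pos rfl, if_neg h1, if_neg h2]; ring

lemma delta_zero {p i k : ℕ} (h1 : k ≠ i) (h2 : k ≠ i + p) (h3 : k ≠ i - 1) :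
    delta p i k = 0 := by
  have h3' : ¬ (1 ≤ i ∧ k = i - 1) := fun h => h3 h.2
  rw [delta, if_neg h1, if_neg h2, if_neg h3']; ring

lemma step_props {p : ℕ} (hp : 0 < p) {g g' : ℕ → ℤ} {n i : ℕ}
    (hg : ∀ k, 0 ≤ g k) (hb : ∀ k, n ≤ k → g k = 0) (hf : fires p g g' i) :
    (∀ k, 0 ≤ g' k) ∧ (∀ k, n + p ≤ k → g' k = 0) ∧
    Sval w₁ g' (n+p) = Sval w₁ g n ∧
    Sval w₂ g' (n+p) = Sval w₂ g n + (p:ℤ)*((p:ℤ)+1) := by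
  have hgi : (p : ℤ) < g i := hf.1
  have heq : g' = fun k => g k + delta p i k := fires_eq hp hf
  have hin : i < n := by
    by_contra h
    have := hb i (by omega)
    have hp0 : (0:ℤ) ≤ (p:ℤ) := Int.natCast_nonneg p
    omega
  have hipn : i + p < n + p := by omega
  refine ⟨?_, ?_, ?_, ?_⟩
  · intro k
    rw [heq]
    show 0 ≤ g k + delta p i k
    by_cases hk : k = i
    · subst hk
      rw [delta_self hp]
      omega
    · have := delta_nonneg p i hk
      have := hg k
      omega
  · intro k hk
    rw [heq]
    show g k + delta p i k = 0
    have hbk : g k = 0 := hb k (by omega)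
    rw [hbk, delta_zero (by omega) (by omega) (by omega)]
    ring
  · rw [heq, Sval_add, Sval_delta_w₁ hipn, Sval_pad w₁ g hb (by omega)]
    ring
  · rw [heq, Sval_add, Sval_delta_w₂ hipn, Sval_pad w₂ g hb (by omega)]

lemma exists_stable {p : ℕ} (hp : 0 < p) :
    ∀ t : ℕ, ∀ g : ℕ → ℤ, ∀ n : ℕ, (∀ k, 0 ≤ g k) → (∀ k, n ≤ k → g k = 0) →
    ((Sval w₁ g n)^3 - Sval w₂ g n).toNat ≤ t →
    ∃ c, Relation.ReflTransGen (kstep p) g c ∧ stable p c := by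
  intro t
  induction t with
  | zero =>
    intro g n hg hb ht
    by_cases hs : stable p g
    · exact ⟨g, Relation.ReflTransGen.refl, hs⟩
    · exfalso
      rw [stable] at hs
      push_neg at hs
      obtain ⟨i, hi⟩ := hs
      obtain ⟨hg', hb', hN, hW⟩ := step_props hp hg hb (fires_fire hp hi)
      have hle := Sval_w₂_le hg' (n + p)
      rw [hN, hW] at hle
      have hq : (2:ℤ) ≤ (p:ℤ)*((p:ℤ)+1) := by
        have : (1:ℤ) ≤ (p:ℤ) := by exact_mod_cast hp
        nlinarith
      set q := (p:ℤ)*((p:ℤ)+1)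
      omega
  | succ t ih =>
    intro g n hg hb ht
    by_cases hs : stable p g
    · exact ⟨g, Relation.ReflTransGen.refl, hs⟩
    · rw [stable] at hs
      push_neg at hs
      obtain ⟨i, hi⟩ := hs
      have hfi := fires_fire hp hi
      obtain ⟨hg', hb', hN, hW⟩ := step_props hp hg hb hfi
      have hle := Sval_w₂_le hg' (n + p)
      rw [hN, hW] at hle
      have hq : (2:ℤ) ≤ (p:ℤ)*((p:ℤ)+1) := by
        have : (1:ℤ) ≤ (p:ℤ) := by exact_mod_cast hp
        nlinarith
      have hm : ((Sval w₁ (fun k => g k + delta p i k) (n+p))^3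
          - Sval w₂ (fun k => g k + delta p i k) (n+p)).toNat ≤ t := by
        rw [hN, hW]
        set q := (p:ℤ)*((p:ℤ)+1)
        omega
      obtain ⟨c, hc1, hc2⟩ := ih _ (n + p) hg' hb' hm
      exact ⟨c, Relation.ReflTransGen.head ⟨i, hfi⟩ hc1, hc2⟩

end KSPMaux
open KSPMaux in
/-- Termination and confluence of KSPM(p): there is no infinite firing
sequence from `b`, and there is a unique stable configuration `π(b)` reachable
from `b`; moreover any stable configuration reached from any `b'` with
`b →* b'` is this same `π(b)`. -/
theorem kspm_unique_fixed_point (p : ℕ) (hp : 0 < p) (b : ℕ → ℤ)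
    (hnonneg : ∀ k, 0 ≤ b k) (hnull : ∃ n, ∀ k, n ≤ k → b k = 0) :
    (¬ ∃ f : ℕ → (ℕ → ℤ), f 0 = b ∧ ∀ n, kstep p (f n) (f (n + 1))) ∧
    ∃ c : ℕ → ℤ,
      (Relation.ReflTransGen (kstep p) b c ∧ stable p c) ∧
      ∀ b' c' : ℕ → ℤ, Relation.ReflTransGen (kstep p) b b' →
        Relation.ReflTransGen (kstep p) b' c' → stable p c' → c' = c := by
  obtain ⟨n0, hn0⟩ := hnull
  constructor
  · -- termination
    rintro ⟨f, hf0, hfs⟩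
    have inv : ∀ m : ℕ, (∀ k, 0 ≤ f m k) ∧ (∀ k, n0 + m*p ≤ k → f m k = 0) ∧
        Sval w₁ (f m) (n0 + m*p) = Sval w₁ b n0 ∧
        Sval w₂ (f m) (n0 + m*p) = Sval w₂ b n0 + (m:ℤ) * ((p:ℤ)*((p:ℤ)+1)) := by
      intro m
      induction m with
      | zero =>
        refine ⟨by simp [hf0]; exact hnonneg, by simpa [hf0] using hn0,
          by simp [hf0], by simp [hf0]⟩
      | succ m ih =>
        obtain ⟨hg, hb, hN, hW⟩ := ih
        obtain ⟨i, hfi⟩ := hfs m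
        obtain ⟨hg', hb', hN', hW'⟩ := step_props hp hg hb hfi
        have hlen : n0 + (m+1)*p = n0 + m*p + p := by ring
        refine ⟨hg', ?_, ?_, ?_⟩
        · intro k hk; exact hb' k (by omega)
        · rw [hlen, hN', hN]
        · rw [hlen, hW', hW]; push_cast; ring
    have key : ∀ m : ℕ, (m:ℤ) ≤ (Sval w₁ b n0)^3 := by
      intro m
      obtain ⟨hg, hb, hN, hW⟩ := inv m
      have hle := Sval_w₂_le hg (n0 + m*p)
      rw [hN, hW] at hle
      have hq : (2:ℤ) ≤ (p:ℤ)*((p:ℤ)+1) := by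
        have : (1:ℤ) ≤ (p:ℤ) := by exact_mod_cast hp
        nlinarith
      have hW0 : 0 ≤ Sval w₂ b n0 :=
        Sval_nonneg (fun k => by simp only [w₂]; positivity) hnonneg n0
      nlinarith [Int.natCast_nonneg m]
    have h1 := key (((Sval w₁ b n0)^3).toNat + 1)
    have h2 := Int.self_le_toNat ((Sval w₁ b n0)^3)
    push_cast at h1
    omega
  · -- existence and uniqueness
    obtain ⟨c, hc1, hc2⟩ := exists_stable hp
      (((Sval w₁ b n0)^3 - Sval w₂ b n0).toNat) b n0 hnonneg hn0 le_rfl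
    exact ⟨c, ⟨hc1, hc2⟩, fun b' c' h1 h2 hs' =>
      stable_unique hp hc1 (h1.trans h2) hc2 hs'⟩
end

section
/- For any configuration σ reachable from the initial configuration (N, 0^ω) in KSPM(p), σ contains no plateau of length strictly greater than p+1; that is, there is no index k with σ_j = 0 (slope zero, i.e., equal heights) for all j with k ≤ j ≤ k+p within the non-empty part of the configuration. -/
def initial (N : ℕ) : ℕ → ℤ := fun i => if i = 0 then (N : ℤ) else 0

/-- Invariant preserved by `kstep`: all slopes are nonnegative, and any plateau
of `p+1` consecutive zero slopes has only zero slopes to its right. -/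
def KInv (p : ℕ) (b : ℕ → ℤ) : Prop :=
  (∀ j, 0 ≤ b j) ∧
  ∀ k : ℕ, (∀ j, k ≤ j → j ≤ k + p → b j = 0) → ∀ j, k + p < j → ¬ 0 < b j

lemma kinv_step (p : ℕ) (hp : 0 < p) (b b' : ℕ → ℤ) (h : kstep p b b')
    (hb : KInv p b) : KInv p b' := by
  obtain ⟨i, hfi, hdec, hinc, hprev, hrest⟩ := h
  obtain ⟨hnn, hplat⟩ := hb
  have hpz : (0:ℤ) < p := by exact_mod_cast hp
  -- nonnegativity
  have hnn' : ∀ j, 0 ≤ b' j := by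
    intro j
    rcases eq_or_ne j i with rfl | hji
    · rw [hdec]; have := hfi; linarith
    rcases eq_or_ne j (i + p) with rfl | hjp
    · rw [hinc]; have := hnn (i + p); linarith
    by_cases hi0 : i = 0
    · rw [hrest j hji hjp (Or.inl hi0)]; exact hnn j
    by_cases hj1 : j = i - 1
    · subst hj1
      rw [hprev (Nat.one_le_iff_ne_zero.2 hi0)]
      have := hnn (i - 1); linarith
    · rw [hrest j hji hjp (Or.inr hj1)]; exact hnn j
  refine ⟨hnn', ?_⟩
  intro k hk j hj hpos
  -- the interval [k, k+p] is untouched by the firing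
  -- first: i+p ∉ [k,k+p]
  have hip : ¬ (k ≤ i + p ∧ i + p ≤ k + p) := by
    rintro ⟨h1, h2⟩
    have := hk (i + p) h1 h2
    rw [hinc] at this
    have := hnn (i + p); linarith
  -- i-1 ∉ [k,k+p] when i ≥ 1
  have him : 1 ≤ i → ¬ (k ≤ i - 1 ∧ i - 1 ≤ k + p) := by
    rintro hi1 ⟨h1, h2⟩
    have := hk (i - 1) h1 h2
    rw [hprev hi1] at this
    have := hnn (i - 1); linarith
  -- i ∉ [k,k+p]
  have hii : ¬ (k ≤ i ∧ i ≤ k + p) := by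
    rintro ⟨h1, h2⟩
    rcases Nat.lt_or_ge k i with hki | hki
    · -- i ≥ 1, i - 1 ∈ interval, contradiction
      have hi1 : 1 ≤ i := by omega
      exact him hi1 ⟨by omega, by omega⟩
    · -- i = k, then i+p = k+p in interval
      have : i = k := le_antisymm hki h1
      exact hip ⟨by omega, by omega⟩
  -- so b is zero on [k,k+p]
  have hbz : ∀ m, k ≤ m → m ≤ k + p → b m = 0 := by
    intro m h1 h2
    have hmi : m ≠ i := by rintro rfl; exact hii ⟨h1, h2⟩
    have hmp : m ≠ i + p := by rintro rfl; exact hip ⟨h1, h2⟩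
    by_cases hi0 : i = 0
    · rw [← hrest m hmi hmp (Or.inl hi0)]; exact hk m h1 h2
    have hm1 : m ≠ i - 1 := by
      rintro rfl
      exact him (Nat.one_le_iff_ne_zero.2 hi0) ⟨h1, h2⟩
    rw [← hrest m hmi hmp (Or.inr hm1)]; exact hk m h1 h2
  have hbig : ¬ (k + p < i) := by
    intro h
    exact hplat k hbz i h (by linarith [hfi])
  -- now j > k+p with b' j > 0; in all cases contradiction
  rcases eq_or_ne j i with rfl | hji
  · exact hbig hj
  rcases eq_or_ne j (i + p) with rfl | hjp
  · -- i > k (since i+p > k+p), and i ∉ [k,k+p], so i > k+p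
    have : k + p < i := by
      rcases Nat.lt_or_ge (k + p) i with h | h
      · exact h
      · exfalso; exact hii ⟨by omega, h⟩
    exact hbig this
  by_cases hi0 : i = 0
  · rw [hrest j hji hjp (Or.inl hi0)] at hpos
    exact hplat k hbz j hj hpos
  by_cases hj1 : j = i - 1
  · subst hj1
    have : k + p < i := by omega
    exact hbig this
  · rw [hrest j hji hjp (Or.inr hj1)] at hpos
    exact hplat k hbz j hj hpos

/-- No plateau of length strictly greater than `p+1` in a configuration
reachable from `(N, 0^ω)`: there is no index `k` with `p+1` consecutive zero
slopes `σ k = ⋯ = σ (k+p) = 0` within the non-empty part of the configuration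
(i.e. with some nonzero slope further right). -/
theorem no_long_plateau (p N : ℕ) (hp : 0 < p) (σ : ℕ → ℤ)
    (hreach : Relation.ReflTransGen (kstep p) (initial N) σ) :
    ¬ ∃ k : ℕ, (∀ j, k ≤ j → j ≤ k + p → σ j = 0) ∧
      (∃ j, k + p < j ∧ 0 < σ j) := by
  have hinv : KInv p σ := by
    induction hreach with
    | refl =>
      constructor
      · intro j; unfold initial; split <;> positivity
      · intro k _ j hj hpos
        have hj0 : j ≠ 0 := by omega
        simp [initial, hj0] at hpos
    | tail _ hstep ih => exact kinv_step p hp _ _ hstep ih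
  rintro ⟨k, hzero, j, hj, hpos⟩
  exact hinv.2 k hzero j hj hpos
end

section
/- The polynomial S(x) = x^{p-1} + 2x^{p-2} + ... + (p-1)x + p (for p ≥ 2) is coprime with its derivative S'(x); concretely, with a(x) = (−(p−1)/(p(p+1)))·x + 1/p and b(x) = (1/(p(p+1)))·x² − (1/(p(p+1)))·x, one has a(x)·S(x) + b(x)·S'(x) = 1. Consequently S has p−1 distinct complex roots. -/
/-! Since `(X - 1)² S = X^(p+1) - (p+1)X + p`, differentiating gives
`(X - 1)(2S + (X - 1)S') = (p+1)(X^p - 1)`, and a linear combination of these two identities,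
divided by `X - 1`, is the Bézout identity `((1-p)X + (p+1)) S + (X² - X) S' = p(p+1)`.
Hence `S` is separable, so over `ℂ` its `p - 1` roots are distinct. -/

open Polynomial

/-- The polynomial `S(x) = x^(p-1) + 2x^(p-2) + ⋯ + (p-1)x + p`. -/
noncomputable def Spoly (p : ℕ) : Polynomial ℚ :=
  ∑ k ∈ Finset.range p, C ((p : ℚ) - k) * X ^ k

theorem Polynomial.Separable.card_roots_toFinset_map {F K : Type*} [Field F] [Field K]
    [IsAlgClosed K] [DecidableEq K] (f : F →+* K) {q : F[X]} (hq : q.Separable) :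
    (q.map f).roots.toFinset.card = q.natDegree := by
  rw [Multiset.toFinset_card_of_nodup (nodup_roots (hq.map (f := f))),
    IsAlgClosed.card_roots_map_eq_natDegree_from_simpleRing]

theorem Spoly_coeff (p k : ℕ) : (Spoly p).coeff k = if k < p then (p : ℚ) - k else 0 := by
  simp only [Spoly, finsetSum_coeff, coeff_C_mul_X_pow]
  rw [Finset.sum_ite_eq]
  simp

theorem Spoly_natDegree (p : ℕ) : (Spoly p).natDegree = p - 1 := by
  rcases Nat.eq_zero_or_pos p with rfl | hp
  · simp [Spoly]
  refine natDegree_eq_of_le_of_coeff_ne_zero ?_ ?_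
  · rw [natDegree_le_iff_coeff_eq_zero]
    intro k hk
    rw [Spoly_coeff, if_neg (by omega)]
  · rw [Spoly_coeff, if_pos (by omega), Nat.cast_pred hp]
    norm_num

theorem Spoly_succ (p : ℕ) : Spoly (p + 1) = Spoly p + ∑ k ∈ Finset.range (p + 1), X ^ k := by
  simp only [Spoly, Finset.sum_range_succ _ p]
  push_cast
  simp only [add_sub_cancel_left, C_1, one_mul, map_sub, map_add, map_natCast]
  rw [← add_assoc, ← Finset.sum_add_distrib]
  congr 1
  refine Finset.sum_congr rfl fun k _ => ?_
  ring

theorem sq_X_sub_one_mul_Spoly (p : ℕ) :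
    (X - 1) ^ 2 * Spoly p = X ^ (p + 1) - ((p : ℚ[X]) + 1) * X + (p : ℚ[X]) := by
  induction p with
  | zero => simp [Spoly]
  | succ n ih =>
    rw [Spoly_succ]
    push_cast
    linear_combination ih + (X - 1) * geom_sum_mul (X : ℚ[X]) (n + 1)

theorem X_sub_one_mul_two_Spoly_add_derivative (p : ℕ) :
    (X - 1) * (2 * Spoly p + (X - 1) * derivative (Spoly p)) =
      ((p : ℚ[X]) + 1) * (X ^ p - 1) := by
  have h := congrArg derivative (sq_X_sub_one_mul_Spoly p)
  simp only [derivative_mul, derivative_sub, derivative_add, derivative_pow, derivative_X,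
    derivative_one, derivative_natCast, add_tsub_cancel_right, map_natCast] at h
  push_cast at h
  linear_combination h

theorem Spoly_bezout_integral (p : ℕ) :
    ((1 - (p : ℚ[X])) * X + ((p : ℚ[X]) + 1)) * Spoly p + (X ^ 2 - X) * derivative (Spoly p) =
      (p : ℚ[X]) * ((p : ℚ[X]) + 1) := by
  refine mul_left_cancel₀ (C_1 (R := ℚ) ▸ X_sub_C_ne_zero 1) ?_
  linear_combination
    X * X_sub_one_mul_two_Spoly_add_derivative p - ((p : ℚ[X]) + 1) * sq_X_sub_one_mul_Spoly p

/-- `S` is coprime with its derivative, via the explicit Bézout identity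
`a·S + b·S' = 1` with `a = (-(p-1)/(p(p+1)))·x + 1/p` and
`b = (1/(p(p+1)))·x² - (1/(p(p+1)))·x`; consequently `S` has `p-1` distinct
complex roots. -/
theorem Spoly_coprime_derivative (p : ℕ) (hp : 2 ≤ p) :
    (C (-((p : ℚ) - 1) / (p * (p + 1))) * X + C (1 / (p : ℚ))) * Spoly p +
      (C (1 / ((p : ℚ) * (p + 1))) * X ^ 2 -
        C (1 / ((p : ℚ) * (p + 1))) * X) * (derivative (Spoly p)) = 1 ∧
    IsCoprime (Spoly p) (derivative (Spoly p)) ∧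
    ((Spoly p).map (algebraMap ℚ ℂ)).roots.toFinset.card = p - 1 := by
  have hp0 : (p : ℚ) ≠ 0 := Nat.cast_ne_zero.mpr (by omega)
  set c := C (1 / ((p : ℚ) * (p + 1)))
  have hnat : (p : ℚ[X]) = C (p : ℚ) := (map_natCast C p).symm
  have hc : c * ((p : ℚ[X]) * ((p : ℚ[X]) + 1)) = 1 := by
    rw [hnat, ← C_1, ← C_add, ← C_mul, ← C_mul, C_inj]
    field_simp
  have ha : C (-((p : ℚ) - 1) / (p * (p + 1))) = c * (1 - p) := by
    rw [hnat, ← C_1, ← C_sub, ← C_mul, C_inj]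
    field_simp
    ring
  have hb : C (1 / (p : ℚ)) = c * ((p : ℚ[X]) + 1) := by
    rw [hnat, ← C_1, ← C_add, ← C_mul, C_inj]
    field_simp
  have hbezout : (C (-((p : ℚ) - 1) / (p * (p + 1))) * X + C (1 / (p : ℚ))) * Spoly p +
      (c * X ^ 2 - c * X) * derivative (Spoly p) = 1 := by
    rw [ha, hb]
    linear_combination c * Spoly_bezout_integral p + hc
  refine ⟨hbezout, ⟨_, _, hbezout⟩, ?_⟩
  rw [Separable.card_roots_toFinset_map _ ⟨_, _, hbezout⟩, Spoly_natDegree]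
end

section
/- The polynomial R(x) = x^{p-1} + ((p−1)/p)·x^{p-2} + ... + (2/p)·x + 1/p (for p ≥ 2) has p−1 distinct complex roots, and every complex root λ of R satisfies |λ| ≤ (p−1)/p < 1. -/
/-!
The roots of `R` are those of `p R(x) = ∑_{k<p} (k+1) x^k`, whose coefficients have
consecutive ratios `(k+1)/(k+2) ≤ (p-1)/p`, so the Eneström–Kakeya theorem bounds their modulus
by `(p-1)/p`.
For distinctness, `(x-1)² p R(x) = p x^(p+1) - (p+1) x^p + 1` has derivative
`p(p+1) x^(p-1) (x-1)`, vanishing only at `0` and `1`. A repeated root of `R` would be a root of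
this derivative, but `R(0) = 1/p ≠ 0` and `1` violates the modulus bound.
-/

open Polynomial

/-- The polynomial `R(x) = x^(p-1) + ((p-1)/p)x^(p-2) + ⋯ + (2/p)x + 1/p`. -/
noncomputable def Rpoly (p : ℕ) : Polynomial ℚ :=
  ∑ k ∈ Finset.range p, C (((k : ℚ) + 1) / p) * X ^ k

open Finset

theorem sub_one_mul_sum_range_succ_mul_pow {R : Type*} [CommRing R] (a : ℕ → R) (z : R)
    (n : ℕ) :
    (z - 1) * ∑ k ∈ range (n + 1), a k * z ^ k =
      a n * z ^ (n + 1) - a 0 - ∑ k ∈ range n, (a (k + 1) - a k) * z ^ (k + 1) := by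
  induction n with
  | zero => simp [sub_mul, mul_comm]
  | succ n ih =>
    rw [sum_range_succ, mul_add, ih, sum_range_succ]
    ring

/-- If `‖z‖ > 1`, multiplying by `z - 1` writes `a n * z ^ (n + 1)` as a combination of lower
powers of `z` with nonnegative weights summing to `a n`, which is too small. -/
theorem norm_le_one_of_sum_eq_zero_of_monotone {a : ℕ → ℝ} {n : ℕ} (h0 : 0 ≤ a 0)
    (hmono : ∀ k < n, a k ≤ a (k + 1)) (hn : 0 < a n) {z : ℂ}
    (hz : ∑ k ∈ range (n + 1), (a k : ℂ) * z ^ k = 0) : ‖z‖ ≤ 1 := by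
  by_contra! hz1
  have key : (a n : ℂ) * z ^ (n + 1) =
      a 0 + ∑ k ∈ range n, ((a (k + 1) - a k : ℝ) : ℂ) * z ^ (k + 1) := by
    have := sub_one_mul_sum_range_succ_mul_pow (fun k ↦ (a k : ℂ)) z n
    rw [hz, mul_zero] at this
    push_cast
    linear_combination -this
  have hle : a n * ‖z‖ ^ (n + 1) ≤ a n * ‖z‖ ^ n := calc
    a n * ‖z‖ ^ (n + 1) = ‖(a n : ℂ) * z ^ (n + 1)‖ := by
      rw [norm_mul, norm_pow, Complex.norm_real, Real.norm_of_nonneg hn.le]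
    _ ≤ a 0 + ∑ k ∈ range n, (a (k + 1) - a k) * ‖z‖ ^ (k + 1) := by
      rw [key]
      refine (norm_add_le _ _).trans (add_le_add ?_ ((norm_sum_le _ _).trans ?_))
      · rw [Complex.norm_real, Real.norm_of_nonneg h0]
      · refine sum_le_sum fun k hk ↦ ?_
        rw [norm_mul, norm_pow, Complex.norm_real,
          Real.norm_of_nonneg (sub_nonneg.2 (hmono k (mem_range.1 hk)))]
    _ ≤ a 0 * ‖z‖ ^ n + ∑ k ∈ range n, (a (k + 1) - a k) * ‖z‖ ^ n := by
      refine add_le_add (le_mul_of_one_le_right h0 (one_le_pow₀ hz1.le))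
        (sum_le_sum fun k hk ↦ ?_)
      have hk := mem_range.1 hk
      exact mul_le_mul_of_nonneg_left (pow_le_pow_right₀ hz1.le hk) (sub_nonneg.2 (hmono k hk))
    _ = a n * ‖z‖ ^ n := by rw [← sum_mul, sum_range_sub (f := a)]; ring
  have : a n * ‖z‖ ^ n < a n * ‖z‖ ^ (n + 1) := by gcongr; omega
  linarith

/-- The Eneström–Kakeya theorem, reduced to the case `β = 1` by rescaling `z`. -/
theorem norm_le_of_sum_eq_zero_of_le_mul_succ {c : ℕ → ℝ} {n : ℕ} {β : ℝ}
    (hc : ∀ k ≤ n, 0 < c k) (hratio : ∀ k < n, c k ≤ β * c (k + 1)) {z : ℂ}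
    (hz : ∑ k ∈ range (n + 1), (c k : ℂ) * z ^ k = 0) : ‖z‖ ≤ β := by
  rcases Nat.eq_zero_or_pos n with rfl | hn
  · simp only [zero_add, range_one, sum_singleton, pow_zero, mul_one, Complex.ofReal_eq_zero] at hz
    exact absurd hz (hc 0 le_rfl).ne'
  have hβ : 0 < β :=
    pos_of_mul_pos_left ((hc 0 (by omega)).trans_le (hratio 0 hn)) (hc 1 hn).le
  have h := norm_le_one_of_sum_eq_zero_of_monotone (a := fun k ↦ c k * β ^ k) (z := z / β)
    (by simpa using (hc 0 (by omega)).le) (fun k hk ↦ ?_) (by have := hc n le_rfl; positivity) ?_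
  · rwa [norm_div, Complex.norm_real, Real.norm_of_nonneg hβ.le, div_le_one hβ] at h
  · calc c k * β ^ k ≤ β * c (k + 1) * β ^ k := by gcongr; exact hratio k hk
      _ = c (k + 1) * β ^ (k + 1) := by ring
  · rw [← hz]
    refine sum_congr rfl fun k _ ↦ ?_
    have : (β : ℂ) ≠ 0 := by exact_mod_cast hβ.ne'
    push_cast
    rw [div_pow]
    field_simp

theorem nodup_roots_of_eval_derivative_mul_ne_zero {R : Type*} [CommRing R] [IsDomain R]
    {f g : R[X]} (hf : f ≠ 0) (H : ∀ a, f.IsRoot a → (derivative (f * g)).eval a ≠ 0) :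
    f.roots.Nodup := by
  classical
  refine Multiset.nodup_iff_count_le_one.2 fun a ↦ ?_
  rw [count_roots]
  by_contra! ha
  obtain ⟨hroot, hroot'⟩ := (one_lt_rootMultiplicity_iff_isRoot hf).1 ha
  apply H a hroot
  rw [derivative_mul, eval_add, eval_mul, eval_mul, hroot.eq_zero, hroot'.eq_zero]
  ring

theorem sub_one_sq_mul_sum_range_succ_mul_pow {R : Type*} [CommRing R] (x : R) (n : ℕ) :
    (x - 1) ^ 2 * ∑ k ∈ range n, ((k : R) + 1) * x ^ k =
      n * x ^ (n + 1) - (n + 1) * x ^ n + 1 := by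
  induction n with
  | zero => simp
  | succ n ih =>
    rw [sum_range_succ, mul_add, ih]
    push_cast
    ring

theorem derivative_sub_one_sq_mul_sum_range_succ_mul_X_pow {R : Type*} [CommRing R] {n : ℕ}
    (hn : n ≠ 0) :
    derivative ((X - 1) ^ 2 * ∑ k ∈ range n, ((k : R[X]) + 1) * X ^ k) =
      (n : R[X]) * ((n : R[X]) + 1) * X ^ (n - 1) * (X - 1) := by
  have hpow : (X : R[X]) ^ n = X ^ (n - 1) * X := by
    rw [← pow_succ, Nat.sub_add_cancel (by omega)]
  rw [sub_one_sq_mul_sum_range_succ_mul_pow]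
  simp only [derivative_sub, derivative_mul, derivative_natCast, derivative_X_pow,
    derivative_one, Nat.add_sub_cancel, Nat.cast_add, Nat.cast_one, map_add, map_natCast, map_one]
  rw [hpow]
  ring

theorem coeff_Rpoly (p n : ℕ) : (Rpoly p).coeff n = if n < p then ((n : ℚ) + 1) / p else 0 := by
  simp [Rpoly, coeff_C_mul, coeff_X_pow]

theorem natDegree_Rpoly {p : ℕ} (hp : 1 ≤ p) : (Rpoly p).natDegree = p - 1 := by
  refine natDegree_eq_of_le_of_coeff_ne_zero ?_ ?_
  · exact natDegree_le_iff_coeff_eq_zero.2 fun n hn ↦ by simp [coeff_Rpoly]; omega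
  · rw [coeff_Rpoly, if_pos (by omega)]
    positivity

theorem natCast_mul_map_Rpoly {K : Type*} [Field K] [CharZero K] {p : ℕ} (hp : p ≠ 0) :
    (p : K[X]) * (Rpoly p).map (algebraMap ℚ K) =
      ∑ k ∈ range p, ((k : K[X]) + 1) * X ^ k := by
  simp only [Rpoly, Polynomial.map_sum, Polynomial.map_mul, map_C, Polynomial.map_pow, map_X,
    mul_sum]
  refine sum_congr rfl fun k _ ↦ ?_
  rw [← mul_assoc, ← C_eq_natCast, ← C_mul, map_div₀, map_add, map_natCast, map_natCast,
    map_one, mul_div_cancel₀ _ (Nat.cast_ne_zero.2 hp)]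
  simp

theorem norm_le_of_mem_roots_map_Rpoly {p : ℕ} (hp : 2 ≤ p) {z : ℂ}
    (hz : z ∈ ((Rpoly p).map (algebraMap ℚ ℂ)).roots) : ‖z‖ ≤ ((p : ℝ) - 1) / p := by
  have hroot := congrArg (eval z) (natCast_mul_map_Rpoly (K := ℂ) (p := p) (by omega))
  rw [eval_mul, (isRoot_of_mem_roots hz).eq_zero, mul_zero, eval_finsetSum] at hroot
  obtain ⟨n, rfl⟩ : ∃ n, p = n + 1 := ⟨p - 1, by omega⟩
  refine norm_le_of_sum_eq_zero_of_le_mul_succ (c := fun k ↦ (k : ℝ) + 1) (n := n)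
    (fun k _ ↦ by positivity) (fun k hk ↦ ?_) ?_
  · rw [div_mul_eq_mul_div, le_div_iff₀ (by positivity)]
    have : (k : ℝ) + 1 ≤ n := by exact_mod_cast hk
    push_cast
    nlinarith
  · simpa using hroot.symm

theorem nodup_roots_map_Rpoly {p : ℕ} (hp : 2 ≤ p) :
    ((Rpoly p).map (algebraMap ℚ ℂ)).roots.Nodup := by
  have hne : (Rpoly p).map (algebraMap ℚ ℂ) ≠ 0 := ne_zero_of_natDegree_gt (n := 0) (by
    rw [natDegree_map, natDegree_Rpoly (by omega)]; omega)
  refine nodup_roots_of_eval_derivative_mul_ne_zero hne (g := (X - 1) ^ 2 * (p : ℂ[X]))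
    fun a ha ↦ ?_
  have ha0 : a ≠ 0 := by
    rintro rfl
    rw [IsRoot, ← coeff_zero_eq_eval_zero, coeff_map, coeff_Rpoly, if_pos (by omega)] at ha
    simp only [CharP.cast_eq_zero, zero_add, one_div, map_inv₀, map_natCast, inv_eq_zero,
      Nat.cast_eq_zero] at ha
    omega
  have ha1 : a ≠ 1 := by
    rintro rfl
    have := norm_le_of_mem_roots_map_Rpoly hp ((mem_roots hne).2 ha)
    rw [norm_one, le_div_iff₀ (by positivity)] at this
    linarith
  rw [mul_comm, mul_assoc, natCast_mul_map_Rpoly (by omega),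
    derivative_sub_one_sq_mul_sum_range_succ_mul_X_pow (by omega)]
  have hp0 : (p : ℂ) ≠ 0 := by exact_mod_cast (by omega : p ≠ 0)
  have hp1 : (p : ℂ) + 1 ≠ 0 := by exact_mod_cast p.succ_ne_zero
  simp [hp0, hp1, ha0, sub_eq_zero, ha1]

/-- `R` has `p-1` distinct complex roots, all of modulus at most
`(p-1)/p < 1`. -/
theorem Rpoly_roots (p : ℕ) (hp : 2 ≤ p) :
    ((Rpoly p).map (algebraMap ℚ ℂ)).roots.toFinset.card = p - 1 ∧
    (∀ l : ℂ, l ∈ ((Rpoly p).map (algebraMap ℚ ℂ)).roots →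
      ‖l‖ ≤ ((p : ℝ) - 1) / p) ∧
    ((p : ℝ) - 1) / p < 1 := by
  refine ⟨?_, fun l hl ↦ norm_le_of_mem_roots_map_Rpoly hp hl, ?_⟩
  · rw [Multiset.toFinset_card_of_nodup (nodup_roots_map_Rpoly hp),
      IsAlgClosed.card_roots_eq_natDegree, natDegree_map, natDegree_Rpoly (by omega)]
  · rw [div_lt_one (by positivity)]
    linarith
end

section
/- Eneström–Kakeya upper bound: if P(x) = c_n x^n + c_{n-1} x^{n-1} + ... + c_0 has all coefficients c_k real and positive, then every complex root λ of P satisfies |λ| ≤ max_{0 ≤ k ≤ n-1} (c_k / c_{k+1}). -/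
open Polynomial

/-!
Multiplying `P` by `X - B`, where `B` is the largest ratio `cₖ / cₖ₊₁`, gives a polynomial `Q`
whose coefficients other than the leading one are all nonpositive. For such a `Q` the triangle
inequality at a root `z` yields `Q(|z|) ≤ 0`; as `Q(|z|) = (|z| - B) P(|z|)` and `P(|z|) > 0`,
this forces `|z| ≤ B`.
-/

theorem Polynomial.eval_norm_nonpos_of_isRoot {𝕜 : Type*} [RCLike 𝕜] {Q : ℝ[X]}
    (hcoeff : ∀ k < Q.natDegree, Q.coeff k ≤ 0) {z : 𝕜}
    (hroot : (Q.map (algebraMap ℝ 𝕜)).IsRoot z) : Q.eval ‖z‖ ≤ 0 := by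
  set m := Q.natDegree
  have hlead : (Q.coeff m : 𝕜) * z ^ m = -∑ k ∈ Finset.range m, (Q.coeff k : 𝕜) * z ^ k := by
    rw [IsRoot, eval_map, eval₂_eq_sum_range, Finset.sum_range_succ] at hroot
    exact eq_neg_of_add_eq_zero_right hroot
  have hbound : |Q.coeff m| * ‖z‖ ^ m ≤ ∑ k ∈ Finset.range m, -Q.coeff k * ‖z‖ ^ k := by
    calc |Q.coeff m| * ‖z‖ ^ m = ‖(Q.coeff m : 𝕜) * z ^ m‖ := by
          rw [norm_mul, norm_pow, RCLike.norm_ofReal]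
      _ ≤ ∑ k ∈ Finset.range m, ‖(Q.coeff k : 𝕜) * z ^ k‖ := by
          rw [hlead, norm_neg]; exact norm_sum_le _ _
      _ = ∑ k ∈ Finset.range m, -Q.coeff k * ‖z‖ ^ k := by
          refine Finset.sum_congr rfl fun k hk => ?_
          rw [norm_mul, norm_pow, RCLike.norm_ofReal,
            abs_of_nonpos (hcoeff k (Finset.mem_range.mp hk))]
  rw [eval_eq_sum_range, Finset.sum_range_succ]
  simp only [neg_mul, Finset.sum_neg_distrib] at hbound
  nlinarith [le_abs_self (Q.coeff m), pow_nonneg (norm_nonneg z) m]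

theorem Polynomial.eval_pos_of_coeff_pos {P : ℝ[X]} (hpos : ∀ k ≤ P.natDegree, 0 < P.coeff k)
    {x : ℝ} (hx : 0 ≤ x) : 0 < P.eval x := by
  rw [eval_eq_sum_range, Finset.sum_range_succ', pow_zero, mul_one]
  refine add_pos_of_nonneg_of_pos (Finset.sum_nonneg fun k hk => ?_) (hpos 0 (Nat.zero_le _))
  have hk : k + 1 ≤ P.natDegree := Finset.mem_range.mp hk
  exact mul_nonneg (hpos _ hk).le (pow_nonneg hx _)

theorem Polynomial.coeff_X_sub_C_mul_nonpos {P : ℝ[X]} {B : ℝ} (hB : 0 ≤ B)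
    (h0 : 0 ≤ P.coeff 0) (hratio : ∀ k < P.natDegree, P.coeff k ≤ B * P.coeff (k + 1)) :
    ∀ k < ((X - C B) * P).natDegree, ((X - C B) * P).coeff k ≤ 0 := by
  have hdeg : ((X - C B) * P).natDegree ≤ P.natDegree + 1 :=
    natDegree_mul_le.trans (by rw [natDegree_X_sub_C, add_comm])
  rintro (_ | k) hk
  · rw [mul_coeff_zero, coeff_sub, coeff_X_zero, coeff_C_zero, zero_sub, neg_mul]
    exact neg_nonpos.mpr (mul_nonneg hB h0)
  · rw [coeff_X_sub_C_mul, sub_nonpos]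
    exact hratio k (by omega)

/-- Eneström–Kakeya upper bound: if `P = cₙxⁿ + ⋯ + c₀` has all coefficients
real and positive, then every complex root `l` of `P` satisfies
`|l| ≤ max_{0 ≤ k ≤ n-1} cₖ / cₖ₊₁`. -/
theorem enestrom_kakeya_upper (n : ℕ) (hn : 1 ≤ n) (P : Polynomial ℝ)
    (hdeg : P.natDegree = n) (hpos : ∀ k, k ≤ n → 0 < P.coeff k)
    (l : ℂ) (hroot : (P.map (algebraMap ℝ ℂ)).IsRoot l) :
    ‖l‖ ≤
      (Finset.range n).sup' (Finset.nonempty_range_iff.mpr (by omega))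
        (fun k => P.coeff k / P.coeff (k + 1)) := by
  set B := (Finset.range n).sup' (Finset.nonempty_range_iff.mpr (by omega))
    (fun k => P.coeff k / P.coeff (k + 1))
  have hratio_le : ∀ k < n, P.coeff k / P.coeff (k + 1) ≤ B := fun k hk =>
    Finset.le_sup' (fun k => P.coeff k / P.coeff (k + 1)) (Finset.mem_range.mpr hk)
  have hB : 0 ≤ B := (div_pos (hpos 0 (Nat.zero_le n)) (hpos 1 hn)).le.trans (hratio_le 0 hn)
  rw [← hdeg] at hpos hratio_le
  have hratio : ∀ k < P.natDegree, P.coeff k ≤ B * P.coeff (k + 1) := fun k hk =>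
    (div_le_iff₀ (hpos (k + 1) hk)).mp (hratio_le k hk)
  have hQroot : (((X - C B) * P).map (algebraMap ℝ ℂ)).IsRoot l := by
    rw [IsRoot, Polynomial.map_mul, eval_mul, hroot.eq_zero, mul_zero]
  have hQ := eval_norm_nonpos_of_isRoot (coeff_X_sub_C_mul_nonpos hB (hpos 0 (Nat.zero_le _)).le hratio) hQroot
  rw [eval_mul, eval_sub, eval_X, eval_C] at hQ
  exact sub_nonpos.mp
    (nonpos_of_mul_nonpos_left hQ (eval_pos_of_coeff_pos hpos (norm_nonneg l)))
end

section
/- Let A be the (p+1)×(p+1) matrix over ℚ with A_{i,i+1} = 1 for 0 ≤ i ≤ p−1, A_{p,0} = −1/p, A_{p,p} = (p+1)/p, and all other entries 0. Then the characteristic polynomial of A equals (x−1)²·R(x), where R(x) = Σ_{k=0}^{p-1} ((k+1)/p)·x^k. In particular 1 is an eigenvalue of A of algebraic multiplicity 2. -/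
open Polynomial

/-- The `(p+1)×(p+1)` matrix of the sandpile recurrence:
superdiagonal `1`s, `A_{p,0} = -1/p`, `A_{p,p} = (p+1)/p`. -/
def Amat (p : ℕ) : Matrix (Fin (p + 1)) (Fin (p + 1)) ℚ :=
  Matrix.of fun i j =>
    if (i : ℕ) < p ∧ (j : ℕ) = (i : ℕ) + 1 then 1
    else if (i : ℕ) = p ∧ (j : ℕ) = 0 then -1 / p
    else if (i : ℕ) = p ∧ (j : ℕ) = p then ((p : ℚ) + 1) / p
    else 0

/-!
`Amat p` is the companion matrix of the recurrence, so expanding `det (X - A)` along the first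
column (the minor at the top is again a companion matrix, the one at the bottom is triangular)
gives `X^(p+1) - ((p+1)/p) X^p + 1/p`. Up to the factor `1/p` this is
`p X^(p+1) - (p+1) X^p + 1 = (X - 1)² Σ_{k<p} (k+1) X^k`, and `R(1) = (p+1)/2 ≠ 0`,
so the root `1` has multiplicity exactly `2`.
-/

namespace Matrix

variable {R : Type*}

def companion [Zero R] [One R] {n : ℕ} (c : Fin (n + 1) → R) :
    Matrix (Fin (n + 1)) (Fin (n + 1)) R :=
  of fun i j => if i = Fin.last n then c j else if (j : ℕ) = i + 1 then 1 else 0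

theorem companion_submatrix_succ [Zero R] [One R] {n : ℕ} (c : Fin (n + 2) → R) :
    (companion c).submatrix Fin.succ Fin.succ = companion (Fin.tail c) := by
  ext i j
  simp [companion, Fin.tail]

theorem charmatrix_submatrix [CommRing R] {m n : Type*} [DecidableEq m] [DecidableEq n]
    [Fintype m] [Fintype n] (M : Matrix n n R) {e : m → n} (he : Function.Injective e) :
    (charmatrix M).submatrix e e = charmatrix (M.submatrix e e) := by
  ext i j : 1
  by_cases h : i = j
  · simp [h]
  · simp [h, he.ne h]

theorem det_charmatrix_companion_submatrix_succAbove_last [CommRing R] {n : ℕ}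
    (c : Fin (n + 2) → R) :
    ((charmatrix (companion c)).submatrix (Fin.last (n + 1)).succAbove Fin.succ).det =
      (-1) ^ (n + 1) := by
  rw [Fin.succAbove_last, det_of_isLowerTriangular]
  · have hdiag : ∀ i : Fin (n + 1), charmatrix (companion c) i.castSucc i.succ = -1 := by
      intro i
      simp [charmatrix_apply_ne _ _ _ i.castSucc_lt_succ.ne, companion, Fin.castSucc_ne_last]
    simp [hdiag]
  · intro i j hij
    have hij' : (i : ℕ) < j := hij
    have hne : i.castSucc ≠ j.succ := by
      simp only [ne_eq, Fin.ext_iff, Fin.val_castSucc, Fin.val_succ]; omega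
    simp [charmatrix_apply_ne _ _ _ hne, companion, Fin.castSucc_ne_last]
    omega

theorem charpoly_companion [CommRing R] {n : ℕ} (c : Fin (n + 1) → R) :
    (companion c).charpoly = X ^ (n + 1) - ∑ i, C (c i) * X ^ (i : ℕ) := by
  induction n with
  | zero =>
    rw [charpoly, det_fin_one, charmatrix_apply_eq]
    simp [companion]
  | succ n ih =>
    have hlast : (0 : Fin (n + 2)) ≠ Fin.last (n + 1) := Fin.last_pos.ne
    have hcol : ∀ i, i ≠ 0 ∧ i ≠ Fin.last (n + 1) → charmatrix (companion c) i 0 = 0 := by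
      rintro i ⟨hi0, hil⟩
      simp [charmatrix_apply_ne _ _ _ hi0, companion, hil]
    have hentry0 : charmatrix (companion c) 0 0 = X := by simp [companion]
    have hentryL : charmatrix (companion c) (Fin.last (n + 1)) 0 = -C (c 0) := by
      simp [companion]
    have hminor0 : ((charmatrix (companion c)).submatrix (Fin.succAbove 0) Fin.succ).det =
        (companion (Fin.tail c)).charpoly := by
      rw [Fin.succAbove_zero, charmatrix_submatrix _ (Fin.succ_injective _),
        companion_submatrix_succ]
      rfl
    rw [charpoly, det_succ_column_zero,
      Fintype.sum_eq_add _ _ hlast (fun i hi => by rw [hcol i hi, mul_zero, zero_mul]),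
      hentry0, hentryL, hminor0, det_charmatrix_companion_submatrix_succAbove_last, ih, Fin.sum_univ_succ (n := n + 1)]
    simp only [Fin.val_zero, Fin.val_last, pow_zero, one_mul, Fin.val_succ]
    have hsign : ((-1 : R[X]) ^ (n + 1)) * (-1) ^ (n + 1) = 1 := by
      rw [← mul_pow, neg_one_mul, neg_neg, one_pow]
    have hshift : ∑ i : Fin (n + 1), C (c i.succ) * X ^ ((i : ℕ) + 1) =
        X * ∑ i, C (Fin.tail c i) * X ^ (i : ℕ) := by
      rw [Finset.mul_sum]
      exact Finset.sum_congr rfl fun i _ => by rw [Fin.tail]; ring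
    rw [hshift]
    linear_combination (-C (c 0)) * hsign

end Matrix

theorem sq_X_sub_one_mul_sum_range {R : Type*} [CommRing R] (n : ℕ) :
    (X - 1) ^ 2 * ∑ k ∈ Finset.range n, ((k : R[X]) + 1) * X ^ k =
      (n : R[X]) * X ^ (n + 1) - ((n : R[X]) + 1) * X ^ n + 1 := by
  induction n with
  | zero => simp
  | succ n ih =>
    rw [Finset.sum_range_succ, mul_add, ih]
    push_cast
    ring

def sandpileCoeff (p : ℕ) (j : Fin (p + 1)) : ℚ :=
  if (j : ℕ) = 0 then -1 / p else if (j : ℕ) = p then ((p : ℚ) + 1) / p else 0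

theorem Amat_eq_companion (p : ℕ) : Amat p = Matrix.companion (sandpileCoeff p) := by
  ext i j
  have hlast : i = Fin.last p ↔ (i : ℕ) = p := Fin.ext_iff
  simp only [Amat, Matrix.companion, Matrix.of_apply, sandpileCoeff, hlast]
  split_ifs <;> first | rfl | omega

theorem sum_sandpileCoeff_mul_X_pow {p : ℕ} (hp : p ≠ 0) :
    ∑ j, C (sandpileCoeff p j) * X ^ (j : ℕ) =
      C (-1 / (p : ℚ)) + C (((p : ℚ) + 1) / p) * X ^ p := by
  have hlast : (0 : Fin (p + 1)) ≠ Fin.last p := by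
    rw [Ne, Fin.ext_iff, Fin.val_zero, Fin.val_last]
    exact hp.symm
  rw [Fintype.sum_eq_add _ _ hlast]
  · simp [sandpileCoeff, hp]
  · rintro j ⟨hj0, hjl⟩
    have hj0' : (j : ℕ) ≠ 0 := fun h => hj0 (Fin.ext h)
    have hjl' : (j : ℕ) ≠ p := fun h => hjl (Fin.ext h)
    rw [sandpileCoeff, if_neg hj0', if_neg hjl', map_zero, zero_mul]

theorem Rpoly_eq_C_inv_mul_sum (p : ℕ) :
    Rpoly p = C (p : ℚ)⁻¹ * ∑ k ∈ Finset.range p, ((k : ℚ[X]) + 1) * X ^ k := by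
  rw [Rpoly, Finset.mul_sum]
  refine Finset.sum_congr rfl fun k _ => ?_
  rw [div_eq_inv_mul, C_mul]
  simp [mul_assoc]

theorem charpoly_Amat {p : ℕ} (hp : p ≠ 0) : (Amat p).charpoly = (X - 1) ^ 2 * Rpoly p := by
  have hunit : C (p : ℚ)⁻¹ * (p : ℚ[X]) = 1 := by
    rw [← map_natCast C, ← C_mul, inv_mul_cancel₀ (Nat.cast_ne_zero.mpr hp), C_1]
  have hc0 : (-1 / p : ℚ) = -(p : ℚ)⁻¹ := by ring
  have hcp : ((p : ℚ) + 1) / p = 1 + (p : ℚ)⁻¹ := by field_simp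
  rw [Amat_eq_companion, Matrix.charpoly_companion, sum_sandpileCoeff_mul_X_pow hp,
    Rpoly_eq_C_inv_mul_sum, mul_left_comm, sq_X_sub_one_mul_sum_range, hc0, hcp]
  simp only [map_neg, map_add, map_one]
  linear_combination (X ^ p - X ^ (p + 1)) * hunit

theorem Rpoly_eval_one_pos {p : ℕ} (hp : 1 ≤ p) : 0 < (Rpoly p).eval 1 := by
  simp only [Rpoly, eval_finsetSum, eval_mul, eval_C, eval_pow, eval_X, one_pow, mul_one]
  exact Finset.sum_pos (fun k _ => by positivity) ⟨0, Finset.mem_range.mpr hp⟩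

/-- The characteristic polynomial of `A` is `(X-1)² · R(X)`; in particular `1`
is an eigenvalue of `A` of algebraic multiplicity `2`. -/
theorem Amat_charpoly (p : ℕ) (hp : 1 ≤ p) :
    (Amat p).charpoly = (X - 1) ^ 2 * Rpoly p ∧
    (Amat p).charpoly.rootMultiplicity 1 = 2 := by
  have hcp := charpoly_Amat (Nat.pos_iff_ne_zero.mp hp)
  have hR := Rpoly_eval_one_pos hp
  refine ⟨hcp, ?_⟩
  rw [hcp, mul_comm, ← C_1, rootMultiplicity_mul_X_sub_C_pow (fun h => by simp [h] at hR),
    rootMultiplicity_eq_zero hR.ne']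
end

section
/- Averaging system, monotonicity of extremes: let (y_i) be integers with y_{i+p} = m_i + β_i where m_i is the mean of y_i,...,y_{i+p-1} and 0 ≤ β_i ≤ 1. If the window (y_i,...,y_{i+p-1}) is not constant, then min(y_{i+1},...,y_{i+p}) ≥ min(y_i,...,y_{i+p-1}) and max(y_{i+1},...,y_{i+p}) ≤ max(y_i,...,y_{i+p-1}). -/
/-- Monotonicity of extremes in the averaging system: if the window at `i` is
not constant, then the minimum of the next window does not decrease and the
maximum does not increase. -/
theorem averaging_extremes_monotone (p : ℕ) (hp : 0 < p)
    (y : ℕ → ℤ) (β : ℕ → ℚ)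
    (hβ : ∀ i, 0 ≤ β i ∧ β i ≤ 1)
    (hrec : ∀ i, (y (i + p) : ℚ) =
      (∑ j ∈ Finset.range p, (y (i + j) : ℚ)) / p + β i)
    (i : ℕ)
    (hne : ¬ ∀ j < p, y (i + j) = y i) :
    (Finset.range p).inf' (Finset.nonempty_range_iff.mpr hp.ne')
        (fun j => y (i + j)) ≤
      (Finset.range p).inf' (Finset.nonempty_range_iff.mpr hp.ne')
        (fun j => y (i + 1 + j)) ∧
    (Finset.range p).sup' (Finset.nonempty_range_iff.mpr hp.ne')
        (fun j => y (i + 1 + j)) ≤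
      (Finset.range p).sup' (Finset.nonempty_range_iff.mpr hp.ne')
        (fun j => y (i + j)) := by
  push_neg at hne
  obtain ⟨j₀, hj₀p, hj₀⟩ := hne
  have hSne : (Finset.range p).Nonempty := Finset.nonempty_range_iff.mpr hp.ne'
  set m := (Finset.range p).inf' hSne (fun j => y (i + j)) with hm
  set M := (Finset.range p).sup' hSne (fun j => y (i + j)) with hM
  have hmle : ∀ j ∈ Finset.range p, m ≤ y (i + j) :=
    fun j hj => Finset.inf'_le (fun j => y (i + j)) hj
  have hleM : ∀ j ∈ Finset.range p, y (i + j) ≤ M :=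
    fun j hj => Finset.le_sup' (fun j => y (i + j)) hj
  have h0 : (0 : ℕ) ∈ Finset.range p := Finset.mem_range.mpr hp
  have hj₀S : j₀ ∈ Finset.range p := Finset.mem_range.mpr hj₀p
  have hexm : ∃ k ∈ Finset.range p, m < y (i + k) := by
    rcases lt_or_eq_of_le (hmle j₀ hj₀S) with h | h
    · exact ⟨j₀, hj₀S, h⟩
    · refine ⟨0, h0, ?_⟩
      rcases lt_or_eq_of_le (hmle 0 h0) with h' | h'
      · exact h'
      · exfalso; apply hj₀
        have h0' : y (i + 0) = y i := by norm_num
        omega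
  have hexM : ∃ k ∈ Finset.range p, y (i + k) < M := by
    rcases lt_or_eq_of_le (hleM j₀ hj₀S) with h | h
    · exact ⟨j₀, hj₀S, h⟩
    · refine ⟨0, h0, ?_⟩
      rcases lt_or_eq_of_le (hleM 0 h0) with h' | h'
      · exact h'
      · exfalso; apply hj₀
        have h0' : y (i + 0) = y i := by norm_num
        omega
  have hsum_lt : (p : ℤ) * m < ∑ j ∈ Finset.range p, y (i + j) := by
    have := Finset.sum_lt_sum (f := fun _ => m) (g := fun j => y (i + j)) hmle hexm
    simpa [Finset.sum_const, mul_comm] using this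
  have hsum_gt : (∑ j ∈ Finset.range p, y (i + j)) < (p : ℤ) * M := by
    have := Finset.sum_lt_sum (f := fun j => y (i + j)) (g := fun _ => M) hleM hexM
    simpa [Finset.sum_const, mul_comm] using this
  have hp0 : (0 : ℚ) < (p : ℚ) := by exact_mod_cast hp
  have hmeanl : (m : ℚ) < (∑ j ∈ Finset.range p, (y (i + j) : ℚ)) / p := by
    rw [lt_div_iff₀ hp0]
    have : ((p : ℤ) * m : ℚ) < ((∑ j ∈ Finset.range p, y (i + j) : ℤ) : ℚ) := by
      exact_mod_cast hsum_lt
    push_cast at this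
    linarith
  have hmeanu : (∑ j ∈ Finset.range p, (y (i + j) : ℚ)) / p < (M : ℚ) := by
    rw [div_lt_iff₀ hp0]
    have : ((∑ j ∈ Finset.range p, y (i + j) : ℤ) : ℚ) < ((p : ℤ) * M : ℚ) := by
      exact_mod_cast hsum_gt
    push_cast at this
    linarith
  have hyl : m ≤ y (i + p) := by
    have : (m : ℚ) < (y (i + p) : ℚ) := by
      rw [hrec i]
      have := (hβ i).1
      linarith
    exact_mod_cast this.le
  have hyu : y (i + p) ≤ M := by
    have : (y (i + p) : ℚ) < (M : ℚ) + 1 := by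
      rw [hrec i]
      have := (hβ i).2
      linarith
    have h2 : y (i + p) < M + 1 := by exact_mod_cast this
    omega
  constructor
  · apply Finset.le_inf'
    intro j hj
    have hj' : j < p := Finset.mem_range.mp hj
    have heq : i + 1 + j = i + (j + 1) := by omega
    rw [heq]
    rcases Nat.lt_or_ge (j + 1) p with h | h
    · exact hmle (j + 1) (Finset.mem_range.mpr h)
    · rw [show j + 1 = p by omega]; exact hyl
  · apply Finset.sup'_le
    intro j hj
    have hj' : j < p := Finset.mem_range.mp hj
    have heq : i + 1 + j = i + (j + 1) := by omega
    rw [heq]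
    rcases Nat.lt_or_ge (j + 1) p with h | h
    · exact hleM (j + 1) (Finset.mem_range.mpr h)
    · rw [show j + 1 = p by omega]; exact hyu
end

section
/- Uniform vector forces wave pattern: let p ≥ 1 and (y_i)_{i≥n} be integers with y_{i+p}·p = y_i + ... + y_{i+p-1} + b_i where b_i ∈ {0, 1, ..., p} for all i ≥ n, and suppose y_n = y_{n+1} = ... = y_{n+p-1} (the window at n is constant). Then for each i ≥ n at which the current window y_i, ..., y_{i+p-1} is constant, either b_i = 0 and the window at i+1 is constant, or b_i = p, b_{i+1} = p−1, ..., b_{i+p-1} = 1, and the window at i+p is constant with all entries incremented by 1. -/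
/-- A uniform window forces the wave pattern: in the averaging system
`p · y (i+p) = y i + ⋯ + y (i+p-1) + b i` with `0 ≤ b i ≤ p`, if the window at
`n` is constant, then at every index `i ≥ n` where the window is constant,
either `b i = 0` and the window at `i+1` is constant, or `b i = p`, the next
slopes are `b (i+j) = p - j` for `j < p`, and the window at `i+p` is constant
with all entries incremented by `1`. -/
theorem uniform_window_forces_wave (p n : ℕ) (hp : 1 ≤ p)
    (y : ℕ → ℤ) (b : ℕ → ℕ)
    (hb : ∀ i, n ≤ i → b i ≤ p)
    (hrec : ∀ i, n ≤ i →
      (y (i + p)) * p = (∑ j ∈ Finset.range p, y (i + j)) + b i)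
    (h0 : ∀ j < p, y (n + j) = y n) :
    ∀ i, n ≤ i → (∀ j < p, y (i + j) = y i) →
      (b i = 0 ∧ ∀ j < p, y (i + 1 + j) = y (i + 1)) ∨
      (b i = p ∧ (∀ j < p, b (i + j) = p - j) ∧
        ∀ j < p, y (i + p + j) = y i + 1) := by
  intro i hi hwin
  have hpZ : (0:ℤ) < p := by exact_mod_cast hp
  have hsum0 : (∑ j ∈ Finset.range p, y (i + j)) = p * y i := by
    rw [Finset.sum_congr rfl (fun j hj => hwin j (Finset.mem_range.mp hj))]
    simp [mul_comm]
  have hreci := hrec i hi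
  rw [hsum0] at hreci
  have hbZ : (0:ℤ) ≤ (b i : ℤ) := Int.ofNat_nonneg _
  have hbp : ((b i : ℤ)) ≤ p := by exact_mod_cast hb i hi
  have h01 : y (i + p) = y i ∨ y (i + p) = y i + 1 := by
    rcases lt_trichotomy (y (i + p)) (y i) with h | h | h
    · exfalso; nlinarith
    · exact Or.inl h
    · right
      rcases lt_trichotomy (y (i + p)) (y i + 1) with h' | h' | h'
      · omega
      · exact h'
      · exfalso; nlinarith
  rcases h01 with h | h
  · -- b i = 0 case
    have hb0 : (b i : ℤ) = 0 := by rw [h] at hreci; linarith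
    have hb0' : b i = 0 := by exact_mod_cast hb0
    left
    refine ⟨hb0', ?_⟩
    have hall : ∀ j < p, y (i + 1 + j) = y i := by
      intro j hj
      rcases Nat.lt_or_ge (j + 1) p with hjp | hjp
      · have := hwin (j + 1) hjp
        rwa [show i + 1 + j = i + (j + 1) by omega]
      · have hjp' : j + 1 = p := by omega
        rw [show i + 1 + j = i + p by omega]
        exact h
    have h1 : y (i + 1) = y i := by
      have := hall 0 hp
      simpa using this
    intro j hj
    rw [hall j hj, h1]
  · -- b i = p case
    have hbp' : (b i : ℤ) = p := by rw [h] at hreci; linarith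
    have hbip : b i = p := by exact_mod_cast hbp'
    have key : ∀ k, k ≤ p →
        ((∑ j ∈ Finset.range p, y (i + k + j)) = p * y i + k ∧
         ∀ m < k, b (i + m) = p - m ∧ y (i + p + m) = y i + 1) := by
      intro k
      induction k with
      | zero =>
        intro _
        constructor
        · simpa using hsum0
        · intro m hm; omega
      | succ k ih =>
        intro hk1
        have hk : k < p := by omega
        obtain ⟨hSk, hmk⟩ := ih (by omega)
        have hreck := hrec (i + k) (by omega)
        rw [hSk] at hreck
        have hbk : ((b (i + k) : ℤ)) ≤ p := by exact_mod_cast hb (i + k) (by omega)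
        have hbk0 : (0:ℤ) ≤ (b (i + k) : ℤ) := Int.ofNat_nonneg _
        -- e := y (i+k+p) - y i satisfies e * p = k + b (i+k), 0 ≤ k + b < 2p
        have hkb : y (i + k + p) = y i + 1 := by
          rcases lt_trichotomy (y (i + k + p)) (y i + 1) with h' | h' | h'
          · exfalso
            have hle : y (i + k + p) ≤ y i := by omega
            -- then e*p ≤ 0, so k + b = 0, so k = 0 and b i = 0, contradiction
            have : (k : ℤ) + (b (i + k) : ℤ) ≤ 0 := by nlinarith
            have hk0 : k = 0 := by
              have : (k:ℤ) ≤ 0 := by linarith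
              omega
            subst hk0
            simp only [Nat.add_zero] at this hreck
            rw [hbip] at this
            have : (0:ℤ) < p := hpZ
            push_cast at *
            omega
          · exact h'
          · exfalso
            have hge : y i + 2 ≤ y (i + k + p) := by omega
            nlinarith
        have hbkval : (b (i + k) : ℤ) = p - k := by nlinarith [hkb]
        have hbkval' : b (i + k) = p - k := by
          have : (b (i + k) : ℤ) = ((p - k : ℕ) : ℤ) := by push_cast; omega
          exact_mod_cast this
        have hyk : y (i + k) = y i := hwin k hk
        constructor
        · -- new sum
          have h1 := Finset.sum_range_succ (fun j => y (i + k + j)) p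
          have h2 := Finset.sum_range_succ' (fun j => y (i + k + j)) p
          have h3 : ∀ j ∈ Finset.range p, y (i + (k + 1) + j) = y (i + k + (j + 1)) := by
            intro j _; congr 1; omega
          rw [Finset.sum_congr rfl h3]
          have : (∑ j ∈ Finset.range p, y (i + k + (j + 1)))
              = (∑ j ∈ Finset.range p, y (i + k + j)) + y (i + k + p) - y (i + k + 0) := by
            linarith
          rw [this, hSk, hkb]
          simp only [Nat.add_zero, hyk]
          push_cast; ring
        · intro m hm
          rcases Nat.lt_or_ge m k with hmk' | hmk'
          · exact hmk m hmk'
          · have hmk'' : m = k := by omega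
            subst hmk''
            refine ⟨hbkval', ?_⟩
            rwa [show i + p + m = i + m + p by omega]
    obtain ⟨_, hfin⟩ := key p le_rfl
    right
    exact ⟨hbip, fun j hj => (hfin j hj).1, fun j hj => (hfin j hj).2⟩
end

section
/- In KSPM(p), for every k > 0, π(π(k−1)^{↓0}) = π(k), where σ^{↓0} denotes the configuration σ with one unit added to its slope at column 0. That is, the fixed point for k grains can be computed by adding one grain on column 0 of the fixed point for k−1 grains and stabilizing. -/
/-- `σ` with one grain added on column `0` (slope at `0` increased by one). -/
def addGrain (σ : ℕ → ℤ) : ℕ → ℤ := fun i => if i = 0 then σ 0 + 1 else σ i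

/-- `b` stabilizes to `c`. -/
def stabilizesTo (p : ℕ) (b c : ℕ → ℤ) : Prop :=
  Relation.ReflTransGen (kstep p) b c ∧ stable p c

lemma addGrain_apply (σ : ℕ → ℤ) (j : ℕ) :
    addGrain σ j = σ j + if j = 0 then 1 else 0 := by
  unfold addGrain
  split_ifs with hj
  · rw [hj]
  · rw [add_zero]

lemma initial_succ (n : ℕ) : initial (n + 1) = addGrain (initial n) := by
  funext i
  simp only [initial, addGrain_apply]
  split_ifs <;> omega

-- The extra grain on column `0` never blocks a firing: `fires` only asks for a lower bound on
-- the slope at the firing column and prescribes every other change additively.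
lemma fires.addGrain {p : ℕ} {b b' : ℕ → ℤ} {i : ℕ} (h : fires p b b' i) :
    fires p (addGrain b) (addGrain b') i := by
  obtain ⟨hlt, hi, hip, hprev, hrest⟩ := h
  -- for `i + p = 0` the prescribed values of `b' i` and `b' (i + p)` contradict each other
  have hip0 : i + p ≠ 0 := by
    rintro h0
    obtain rfl : i = 0 := by omega
    rw [h0] at hip
    omega
  simp only [fires, addGrain_apply, if_neg hip0]
  refine ⟨?_, ?_, by omega, fun h1 => ?_, fun j hj hjp hj1 => ?_⟩
  · split_ifs <;> omega
  · split_ifs <;> omega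
  · have := hprev h1
    split_ifs <;> omega
  · have := hrest j hj hjp hj1
    split_ifs <;> omega

lemma kstep.addGrain {p : ℕ} {b b' : ℕ → ℤ} (h : kstep p b b') :
    kstep p (addGrain b) (addGrain b') :=
  let ⟨i, hi⟩ := h
  ⟨i, hi.addGrain⟩

lemma reflTransGen_kstep_addGrain {p : ℕ} {b c : ℕ → ℤ}
    (h : Relation.ReflTransGen (kstep p) b c) :
    Relation.ReflTransGen (kstep p) (addGrain b) (addGrain c) :=
  h.lift addGrain fun _ _ => kstep.addGrain

theorem pi_recurrence_general (p k : ℕ) (hk : 0 < k)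
    (c c' : ℕ → ℤ)
    (hc : stabilizesTo p (initial (k - 1)) c)
    (hc' : stabilizesTo p (addGrain c) c') :
    stabilizesTo p (initial k) c' := by
  obtain ⟨n, rfl⟩ : ∃ n, k = n + 1 := ⟨k - 1, by omega⟩
  refine ⟨?_, hc'.2⟩
  rw [initial_succ]
  exact (reflTransGen_kstep_addGrain hc.1).trans hc'.1

/-- `π(π(k-1)^{↓0}) = π(k)`: the fixed point for `k` grains is obtained by
adding one grain on column `0` of the fixed point for `k-1` grains and
stabilizing. -/
theorem pi_recurrence (p k : ℕ) (hp : 0 < p) (hk : 0 < k)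
    (c c' : ℕ → ℤ)
    (hc : stabilizesTo p (initial (k - 1)) c)
    (hc' : stabilizesTo p (addGrain c) c') :
    stabilizesTo p (initial k) c' :=
  pi_recurrence_general p k hk c c' hc hc'
end
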